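/- arXiv:2004.08500 — 4 statements merged into one kernel-verified Lean document; each statement's English description precedes it below -/
import Mathlib

section
/- The function f₀ on strings over {a,b}, defined by f₀(x) = max(#a(x) - #b(x), 0), is not a rational series: its Hankel matrix has infinite rank. Specifically, the sub-block with rows indexed by prefixes aⁱ (i ≤ n) and columns indexed by suffixes bʲ (j ≤ n) has rank n - 1, which is unbounded in n. -/
/-- The two-letter alphabet `{a, b}`. -/
inductive Sig2 : Type
  | a : Sig2
  | b : Sig2
  deriving DecidableEq

/-- A weighted finite automaton over alphabet `α` with states `Fin n`,
rational initial weights, transition weights, and final weights. -/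
structure WFA (α : Type) where
  n : ℕ
  lam : Fin n → ℚ
  tr : Fin n → α → Fin n → ℚ
  rho : Fin n → ℚ

/-- The function computed by a WFA: the sum over all paths consuming `x` of
(initial weight) · (product of transition weights) · (final weight). -/
def WFA.run {α : Type} (A : WFA α) (x : List α) : ℚ :=
  ∑ q : Fin A.n,
    (x.foldl (fun v σ => fun q' => ∑ p : Fin A.n, v p * A.tr p σ q') A.lam) q * A.rho q

/-- `f₀(x) = max(#a(x) - #b(x), 0)`. -/
def f0 (x : List Sig2) : ℚ :=
  ((max ((x.count Sig2.a : ℤ) - (x.count Sig2.b : ℤ)) 0 : ℤ) : ℚ)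

lemma f0_entry (i j : ℕ) :
    f0 (List.replicate i Sig2.a ++ List.replicate j Sig2.b) = ((i - j : ℕ) : ℚ) := by
  have h1 : (List.replicate i Sig2.a ++ List.replicate j Sig2.b).count Sig2.a = i := by
    simp [List.count_append, List.count_replicate]
  have h2 : (List.replicate i Sig2.a ++ List.replicate j Sig2.b).count Sig2.b = j := by
    simp [List.count_append, List.count_replicate]
  have : max ((i:ℤ) - (j:ℤ)) 0 = ((i - j : ℕ) : ℤ) := by omega
  rw [f0, h1, h2, this]; simp

lemma count_sum (n : ℕ) (i j : Fin n) :
    (∑ k : Fin (n-1), (if (j:ℕ) ≤ (k:ℕ) ∧ (k:ℕ) < (i:ℕ) then (1:ℚ) else 0)) = ((i:ℕ) - (j:ℕ) : ℕ) := by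
  rw [Fin.sum_univ_eq_sum_range (fun k => if (j:ℕ) ≤ k ∧ k < (i:ℕ) then (1:ℚ) else 0)]
  rw [Finset.sum_ite, Finset.sum_const_zero, add_zero]
  have : (Finset.range (n-1)).filter (fun k => (j:ℕ) ≤ k ∧ k < (i:ℕ)) = Finset.Ico (j:ℕ) (i:ℕ) := by
    ext k
    simp only [Finset.mem_filter, Finset.mem_range, Finset.mem_Ico]
    have := i.isLt
    omega
  rw [this]
  simp [Nat.card_Ico]

lemma hankel_rank (n : ℕ) (hn : 1 ≤ n) :
    (Matrix.of fun i j : Fin n =>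
      f0 (List.replicate (i : ℕ) Sig2.a ++ List.replicate (j : ℕ) Sig2.b)).rank = n - 1 := by
  obtain ⟨m, rfl⟩ : ∃ m, n = m + 1 := ⟨n - 1, by omega⟩
  set M : Matrix (Fin (m+1)) (Fin (m+1)) ℚ := Matrix.of fun i j : Fin (m+1) =>
      f0 (List.replicate (i : ℕ) Sig2.a ++ List.replicate (j : ℕ) Sig2.b) with hM
  have hMentry : ∀ i j, M i j = (((i:ℕ) - (j:ℕ) : ℕ) : ℚ) := fun i j => f0_entry _ _
  simp only [Nat.add_sub_cancel]
  -- upper bound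
  have hub : M.rank ≤ m := by
    set P : Matrix (Fin (m+1)) (Fin m) ℚ := fun i k => if (k:ℕ) < (i:ℕ) then 1 else 0 with hP
    set Q : Matrix (Fin m) (Fin (m+1)) ℚ := fun k j => if (j:ℕ) ≤ (k:ℕ) then 1 else 0 with hQ
    have : M = P * Q := by
      ext i j
      rw [Matrix.mul_apply, hMentry]
      have := count_sum (m+1) i j
      rw [← this]
      apply Finset.sum_congr rfl
      intro k _
      by_cases h1 : (j:ℕ) ≤ (k:ℕ) <;> by_cases h2 : (k:ℕ) < (i:ℕ) <;>
        simp [hP, hQ, h1, h2]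
    rw [this]
    exact le_trans (Matrix.rank_mul_le_left P Q)
      (le_trans P.rank_le_card_width (by simp))
  -- lower bound
  have hlb : m ≤ M.rank := by
    set E : Matrix (Fin m) (Fin (m+1)) ℚ := fun i k => if k = i.succ then 1 else 0 with hE
    set F : Matrix (Fin (m+1)) (Fin m) ℚ := fun l j => if l = j.castSucc then 1 else 0 with hF
    have hN : ∀ i j, (E * M * F) i j = M i.succ j.castSucc := by
      intro i j
      rw [Matrix.mul_apply]
      have : ∀ l, (E * M) i l = M i.succ l := by
        intro l
        rw [Matrix.mul_apply]
        rw [Finset.sum_eq_single i.succ]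
        · simp [hE]
        · intro k _ hk; simp [hE, hk]
        · simp
      simp only [this, hF]
      rw [Finset.sum_eq_single j.castSucc]
      · simp
      · intro k _ hk; simp [hk]
      · simp
    have hdet : (E * M * F).det = 1 := by
      rw [Matrix.det_of_lowerTriangular]
      · apply Finset.prod_eq_one
        intro i _
        rw [hN, hMentry]
        simp [Fin.val_succ, Fin.coe_castSucc]
      · intro i j hij
        rw [hN, hMentry]
        simp only [Fin.val_succ, Fin.coe_castSucc]
        have : (j:ℕ) > (i:ℕ) := hij
        have : (i:ℕ) + 1 - (j:ℕ) = 0 := by omega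
        rw [this]; simp
    have hrk : (E * M * F).rank = m := by
      rw [Matrix.rank_of_isUnit _ (Matrix.isUnit_iff_isUnit_det _ |>.mpr (by rw [hdet]; exact isUnit_one))]
      simp
    calc m = (E * M * F).rank := hrk.symm
      _ ≤ (M * F).rank := Matrix.rank_mul_le_right E (M * F) |>.trans_eq' (by rw [Matrix.mul_assoc])
      _ ≤ M.rank := Matrix.rank_mul_le_left M F
  omega

def WFA.mats {α : Type} (A : WFA α) (x : List α) : Matrix (Fin A.n) (Fin A.n) ℚ :=
  x.foldl (fun M σ => M * Matrix.of (fun p q => A.tr p σ q)) 1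

lemma WFA.foldl_mats {α : Type} (A : WFA α) (x : List α)
    (M : Matrix (Fin A.n) (Fin A.n) ℚ) :
    x.foldl (fun M σ => M * Matrix.of (fun p q => A.tr p σ q)) M = M * A.mats x := by
  induction x generalizing M with
  | nil => simp [WFA.mats]
  | cons τ y ih =>
    show List.foldl _ (M * _) y = _
    rw [ih]
    have : A.mats (τ :: y) = Matrix.of (fun p q => A.tr p τ q) * A.mats y := by
      show List.foldl _ (1 * _) y = _
      rw [ih, one_mul]
    rw [this, mul_assoc]

lemma WFA.foldl_eq_vecMul {α : Type} (A : WFA α) (x : List α) (v : Fin A.n → ℚ) :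
    x.foldl (fun v σ => fun q' => ∑ p : Fin A.n, v p * A.tr p σ q') v
      = Matrix.vecMul v (A.mats x) := by
  induction x generalizing v with
  | nil => simp [WFA.mats, Matrix.vecMul_one]
  | cons σ x ih =>
    have hm : A.mats (σ :: x) = Matrix.of (fun p q => A.tr p σ q) * A.mats x := by
      show List.foldl _ (1 * _) x = _
      rw [A.foldl_mats, one_mul]
    rw [List.foldl_cons, ih, hm, ← Matrix.vecMul_vecMul]
    congr 1

lemma WFA.run_eq {α : Type} (A : WFA α) (x : List α) :
    A.run x = dotProduct (Matrix.vecMul A.lam (A.mats x)) A.rho := by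
  rw [WFA.run, WFA.foldl_eq_vecMul]; rfl

lemma WFA.mats_append {α : Type} (A : WFA α) (x y : List α) :
    A.mats (x ++ y) = A.mats x * A.mats y := by
  unfold WFA.mats
  rw [List.foldl_append]
  exact A.foldl_mats y _

/-- `f₀` is not a rational series (no WFA computes it): the Hankel sub-block
with rows `aⁱ` and columns `bʲ` (`i, j < n`) has rank `n - 1`, unbounded in `n`. -/
theorem stmt_1 :
    (¬ ∃ A : WFA Sig2, ∀ x : List Sig2, A.run x = f0 x) ∧
    (∀ n : ℕ, 1 ≤ n →
      (Matrix.of fun i j : Fin n =>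
        f0 (List.replicate (i : ℕ) Sig2.a ++ List.replicate (j : ℕ) Sig2.b)).rank = n - 1) := by
  constructor
  · rintro ⟨A, hA⟩
    set N := A.n + 2 with hN
    set M : Matrix (Fin N) (Fin N) ℚ := Matrix.of fun i j : Fin N =>
        f0 (List.replicate (i : ℕ) Sig2.a ++ List.replicate (j : ℕ) Sig2.b) with hM
    have hrk : M.rank = N - 1 := hankel_rank N (by omega)
    set U : Matrix (Fin N) (Fin A.n) ℚ :=
      fun i q => Matrix.vecMul A.lam (A.mats (List.replicate (i : ℕ) Sig2.a)) q with hU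
    set V : Matrix (Fin A.n) (Fin N) ℚ :=
      fun q j => Matrix.mulVec (A.mats (List.replicate (j : ℕ) Sig2.b)) A.rho q with hV
    have hfac : M = U * V := by
      ext i j
      rw [Matrix.mul_apply]
      have := hA (List.replicate (i : ℕ) Sig2.a ++ List.replicate (j : ℕ) Sig2.b)
      rw [WFA.run_eq, WFA.mats_append] at this
      rw [hM, Matrix.of_apply, ← this, ← Matrix.vecMul_vecMul,
        ← Matrix.dotProduct_mulVec]
      rfl
    have : M.rank ≤ A.n := hfac ▸ (Matrix.rank_mul_le_left U V).trans
      (U.rank_le_card_width.trans (by simp))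
    omega
  · exact hankel_rank
end

section
/- Let aᵢ = i(i+1)/2, bᵢ = i² - 1, and define sequences r, s, t : ℕ → ℚ by rᵢ = a_{i-2}, sᵢ = -b_{i-1}, tᵢ = a_{i-1} for i > 2, with the boundary values r₀=1, r₁=0, r₂=0, s₀=0, s₁=1, s₂=0, t₀=0, t₁=0, t₂=1. Let cᵢ = 1 - 2i² and for each k ∈ ℕ define c⁽ᵏ⁾ᵢ = c_{|i-k|}. Then for all i, k ∈ ℕ: c⁽ᵏ⁾ᵢ = c⁽ᵏ⁾₀·rᵢ + c⁽ᵏ⁾₁·sᵢ + c⁽ᵏ⁾₂·tᵢ. -/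
/-- `aᵢ = i(i+1)/2`. -/
def seqA (i : ℕ) : ℚ := (i : ℚ) * ((i : ℚ) + 1) / 2

/-- `bᵢ = i² - 1`. -/
def seqB (i : ℕ) : ℚ := (i : ℚ) ^ 2 - 1

/-- `rᵢ = a_{i-2}` for `i > 2`, with boundary values `r₀=1, r₁=0, r₂=0`. -/
def seqR (i : ℕ) : ℚ := if i = 0 then 1 else if i ≤ 2 then 0 else seqA (i - 2)

/-- `sᵢ = -b_{i-1}` for `i > 2`, with boundary values `s₀=0, s₁=1, s₂=0`. -/
def seqS (i : ℕ) : ℚ := if i = 1 then 1 else if i ≤ 2 then 0 else -seqB (i - 1)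

/-- `tᵢ = a_{i-1}` for `i > 2`, with boundary values `t₀=0, t₁=0, t₂=1`. -/
def seqT (i : ℕ) : ℚ := if i = 2 then 1 else if i < 2 then 0 else seqA (i - 1)

/-- `cᵢ = 1 - 2i²`. -/
def seqC (i : ℕ) : ℚ := 1 - 2 * (i : ℚ) ^ 2

/-- `c⁽ᵏ⁾ᵢ = c_{|i-k|}`. -/
def seqCk (k i : ℕ) : ℚ := seqC (Nat.dist i k)

lemma sq_dist (i k : ℕ) : ((Nat.dist i k : ℚ)) ^ 2 = ((i : ℚ) - k) ^ 2 := by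
  rcases le_total i k with h | h
  · rw [Nat.dist_eq_sub_of_le h]; push_cast [h]; ring
  · rw [Nat.dist_eq_sub_of_le_right h]; push_cast [h]; ring

/-- Every shifted sequence `c⁽ᵏ⁾` is the stated linear combination of `r`, `s`, `t`:
`c⁽ᵏ⁾ᵢ = c⁽ᵏ⁾₀·rᵢ + c⁽ᵏ⁾₁·sᵢ + c⁽ᵏ⁾₂·tᵢ`. -/
theorem stmt_7 (i k : ℕ) :
    seqCk k i = seqCk k 0 * seqR i + seqCk k 1 * seqS i + seqCk k 2 * seqT i := by
  match i with
  | 0 => simp [seqCk, seqR, seqS, seqT]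
  | 1 => simp [seqCk, seqR, seqS, seqT]
  | 2 => simp [seqCk, seqR, seqS, seqT]
  | (n+3) =>
    simp only [seqCk, seqC, seqR, seqS, seqT, seqA, seqB]
    split_ifs <;> first
      | omega
      | exact ‹False›.elim
      | (rw [show n+3-2 = n+1 from rfl, show n+3-1 = n+2 from rfl,
             sq_dist (n+3) k, sq_dist 0 k, sq_dist 1 k, sq_dist 2 k]
         push_cast
         ring)
end

section
/- Define f : {a,b}* → ℚ by f(x) = 0.5 - 2(#a(x) - #b(x))² if x ∈ a*b*, and f(x) = -0.5 otherwise. Then the Hankel matrix H_f has rank at most 7; hence f is a rational series and is computable by a weighted finite automaton over ℚ. -/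
/-- `x ∈ a*b*`: `x` consists of some `a`s followed by some `b`s. -/
def InAstarBstar (x : List Sig2) : Prop :=
  ∃ i j : ℕ, x = List.replicate i Sig2.a ++ List.replicate j Sig2.b

open Classical

/-- `f(x) = 0.5 - 2(#a(x) - #b(x))²` if `x ∈ a*b*`, and `-0.5` otherwise. -/
noncomputable def fAnbn (x : List Sig2) : ℚ :=
  if InAstarBstar x then
    1 / 2 - 2 * (((x.count Sig2.a : ℤ) - (x.count Sig2.b : ℤ) : ℤ) : ℚ) ^ 2
  else -1 / 2

/-!
An `n`-state WFA has Hankel rank at most `n`: `f(u ++ v) = state(u) ⬝ᵥ (M(v) *ᵥ ρ)`, so the row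
of `u` is the image of the state vector of `u` under a fixed linear map on `ℚⁿ` (the easy half of
Carlyle–Fliess). Both claims therefore follow from a 7-state WFA computing `f`.
-/

open Matrix Submodule Set

namespace WFA

variable {α : Type} (A : WFA α)

def trMatrix (σ : α) : Matrix (Fin A.n) (Fin A.n) ℚ := Matrix.of fun p q => A.tr p σ q

def wordMatrix (x : List α) : Matrix (Fin A.n) (Fin A.n) ℚ := (x.map A.trMatrix).prod

def state (x : List α) : Fin A.n → ℚ := A.lam ᵥ* A.wordMatrix x

theorem wordMatrix_append (u v : List α) :
    A.wordMatrix (u ++ v) = A.wordMatrix u * A.wordMatrix v := by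
  simp [wordMatrix]

theorem wordMatrix_cons (σ : α) (x : List α) :
    A.wordMatrix (σ :: x) = A.trMatrix σ * A.wordMatrix x := by
  simp [wordMatrix]

theorem state_nil : A.state [] = A.lam := by
  simp [state, wordMatrix]

theorem state_append_singleton (x : List α) (σ : α) :
    A.state (x ++ [σ]) = A.state x ᵥ* A.trMatrix σ := by
  simp [state, wordMatrix, ← vecMul_vecMul]

theorem foldl_eq_vecMul_s9 (x : List α) (w : Fin A.n → ℚ) :
    x.foldl (fun v σ q' => ∑ p, v p * A.tr p σ q') w = w ᵥ* A.wordMatrix x := by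
  induction x generalizing w with
  | nil => simp [wordMatrix]
  | cons σ x ih =>
    rw [List.foldl_cons, ih, wordMatrix_cons, ← vecMul_vecMul]
    rfl

theorem run_eq_state_dotProduct (x : List α) : A.run x = A.state x ⬝ᵥ A.rho := by
  rw [run, foldl_eq_vecMul_s9]
  rfl

theorem run_append (u v : List α) :
    A.run (u ++ v) = A.state u ⬝ᵥ (A.wordMatrix v *ᵥ A.rho) := by
  rw [run_eq_state_dotProduct, state, wordMatrix_append, dotProduct_mulVec, ← vecMul_vecMul, state]

theorem rank_span_hankelRows_le :
    Module.rank ℚ (span ℚ (range fun u v => A.run (u ++ v))) ≤ A.n := by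
  let g : Fin A.n → List α → ℚ := fun q v => (A.wordMatrix v *ᵥ A.rho) q
  have hrows : range (fun u v => A.run (u ++ v)) ⊆ span ℚ (range g) := by
    rintro _ ⟨u, rfl⟩
    refine (mem_span_range_iff_exists_fun ℚ).2 ⟨A.state u, ?_⟩
    ext v
    simp [g, run_append, Finset.sum_apply, dotProduct]
  calc Module.rank ℚ (span ℚ (range fun u v => A.run (u ++ v)))
      ≤ Module.rank ℚ (span ℚ (range g)) := Submodule.rank_mono (span_le.2 hrows)
    _ ≤ Cardinal.mk (range g) := rank_span_le _
    _ ≤ A.n := by simpa using Cardinal.mk_range_le (f := g)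

end WFA

open List (replicate)

theorem InAstarBstar.of_append {x y : List Sig2} (h : InAstarBstar (x ++ y)) : InAstarBstar x := by
  obtain ⟨i, j, h⟩ := h
  rcases List.append_eq_append_iff.1 h with ⟨z, hi, -⟩ | ⟨z, hx, hj⟩
  · exact ⟨x.length, 0, by simpa using (List.append_eq_replicate_iff.1 hi.symm).2.1⟩
  · exact ⟨i, z.length, hx.trans (congrArg _ (List.append_eq_replicate_iff.1 hj.symm).2.1)⟩

theorem not_inAstarBstar_append_a {x : List Sig2} (hb : Sig2.b ∈ x) :
    ¬ InAstarBstar (x ++ [Sig2.a]) := by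
  rintro ⟨i, j, h⟩
  cases j with
  | zero =>
    rw [List.replicate_zero, List.append_nil] at h
    exact absurd (List.eq_of_mem_replicate (h ▸ List.mem_append_left _ hb)) (by decide)
  | succ j =>
    rw [List.replicate_succ', ← List.append_assoc] at h
    exact absurd (List.append_inj' h rfl).2 (by decide)

theorem fAnbn_replicate_append_replicate (i j : ℕ) :
    fAnbn (replicate i Sig2.a ++ replicate j Sig2.b) = 1 / 2 - 2 * ((i : ℚ) - j) ^ 2 := by
  rw [fAnbn, if_pos ⟨i, j, rfl⟩]
  simp [List.count_replicate]

theorem fAnbn_of_not_inAstarBstar {x : List Sig2} (h : ¬ InAstarBstar x) : fAnbn x = -1 / 2 :=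
  if_neg h

namespace Anbn

/- While reading `aⁱ` the state is the moment vector `(1, m, m²)` of `m = #a - #b`, carried in
states 0–2; the first `b` moves it to states 3–5, where further `b`s keep updating it, and an `a`
after a `b` sends all weight to the absorbing state 6. The output reads off `1/2 - 2m²` from
either moment block and `-1/2` from state 6. -/
def shift : Sig2 → Matrix (Fin 7) (Fin 7) ℚ
  | .a => !![1, 1, 1, 0, 0, 0, 0;
             0, 1, 2, 0, 0, 0, 0;
             0, 0, 1, 0, 0, 0, 0;
             0, 0, 0, 0, 0, 0, 1;
             0, 0, 0, 0, 0, 0, 0;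
             0, 0, 0, 0, 0, 0, 0;
             0, 0, 0, 0, 0, 0, 1]
  | .b => !![0, 0, 0, 1, -1, 1, 0;
             0, 0, 0, 0, 1, -2, 0;
             0, 0, 0, 0, 0, 1, 0;
             0, 0, 0, 1, -1, 1, 0;
             0, 0, 0, 0, 1, -2, 0;
             0, 0, 0, 0, 0, 1, 0;
             0, 0, 0, 0, 0, 0, 1]

def readingA (m : ℤ) : Fin 7 → ℚ := ![1, m, m ^ 2, 0, 0, 0, 0]

def readingB (m : ℤ) : Fin 7 → ℚ := ![0, 0, 0, 1, m, m ^ 2, 0]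

def rejected : Fin 7 → ℚ := ![0, 0, 0, 0, 0, 0, 1]

def output : Fin 7 → ℚ := ![1 / 2, 0, -2, 1 / 2, 0, -2, -1 / 2]

theorem readingA_vecMul_shift_a (m : ℤ) : readingA m ᵥ* shift .a = readingA (m + 1) := by
  ext q; fin_cases q <;> simp [readingA, shift, vecMul, dotProduct, Fin.sum_univ_succ] <;> ring

theorem readingA_vecMul_shift_b (m : ℤ) : readingA m ᵥ* shift .b = readingB (m - 1) := by
  ext q
  fin_cases q <;> simp [readingA, readingB, shift, vecMul, dotProduct, Fin.sum_univ_succ] <;> ring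

theorem readingB_vecMul_shift_a (m : ℤ) : readingB m ᵥ* shift .a = rejected := by
  ext q; fin_cases q <;> simp [readingB, rejected, shift, vecMul, dotProduct, Fin.sum_univ_succ]

theorem readingB_vecMul_shift_b (m : ℤ) : readingB m ᵥ* shift .b = readingB (m - 1) := by
  ext q; fin_cases q <;> simp [readingB, shift, vecMul, dotProduct, Fin.sum_univ_succ] <;> ring

theorem rejected_vecMul_shift (σ : Sig2) : rejected ᵥ* shift σ = rejected := by
  ext q; cases σ <;> fin_cases q <;> simp [rejected, shift, vecMul, dotProduct, Fin.sum_univ_succ]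

theorem readingA_dotProduct_output (m : ℤ) : readingA m ⬝ᵥ output = 1 / 2 - 2 * (m : ℚ) ^ 2 := by
  simp [readingA, output, dotProduct, Fin.sum_univ_succ]; ring

theorem readingB_dotProduct_output (m : ℤ) : readingB m ⬝ᵥ output = 1 / 2 - 2 * (m : ℚ) ^ 2 := by
  simp [readingB, output, dotProduct, Fin.sum_univ_succ]; ring

theorem rejected_dotProduct_output : rejected ⬝ᵥ output = -1 / 2 := by
  simp [rejected, output, dotProduct, Fin.sum_univ_succ]

-- `abbrev`, so that `Fin wfa.n` unfolds to `Fin 7` and the lemmas above apply to its states.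
abbrev wfa : WFA Sig2 where
  n := 7
  lam := readingA 0
  tr p σ q := shift σ p q
  rho := output

theorem trMatrix_wfa (σ : Sig2) : wfa.trMatrix σ = shift σ := rfl

theorem state_cases (x : List Sig2) :
    (∃ i : ℕ, x = replicate i .a ∧ wfa.state x = readingA i) ∨
    (∃ i j : ℕ, x = replicate i .a ++ replicate (j + 1) .b ∧
      wfa.state x = readingB (i - (j + 1))) ∨
    (¬ InAstarBstar x ∧ wfa.state x = rejected) := by
  induction x using List.reverseRecOn with
  | nil => exact Or.inl ⟨0, rfl, by rw [WFA.state_nil]; rfl⟩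
  | append_singleton x σ ih =>
    rw [WFA.state_append_singleton, trMatrix_wfa]
    rcases ih with ⟨i, rfl, hs⟩ | ⟨i, j, rfl, hs⟩ | ⟨hx, hs⟩ <;> rw [hs]
    · cases σ
      · refine Or.inl ⟨i + 1, List.replicate_succ'.symm, ?_⟩
        rw [readingA_vecMul_shift_a]; push_cast; rfl
      · exact Or.inr (Or.inl ⟨i, 0, rfl, by rw [readingA_vecMul_shift_b]; push_cast; ring_nf⟩)
    · cases σ
      · exact Or.inr (Or.inr ⟨not_inAstarBstar_append_a (by simp), readingB_vecMul_shift_a _⟩)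
      · refine Or.inr (Or.inl ⟨i, j + 1, by simp [List.replicate_succ'], ?_⟩)
        rw [readingB_vecMul_shift_b]; push_cast; ring_nf
    · exact Or.inr (Or.inr ⟨fun h => hx h.of_append, rejected_vecMul_shift σ⟩)

theorem run_wfa (x : List Sig2) : wfa.run x = fAnbn x := by
  rw [WFA.run_eq_state_dotProduct]
  rcases state_cases x with ⟨i, rfl, hs⟩ | ⟨i, j, rfl, hs⟩ | ⟨hx, hs⟩ <;> rw [hs]
  · simpa [readingA_dotProduct_output] using (fAnbn_replicate_append_replicate i 0).symm
  · rw [readingB_dotProduct_output, fAnbn_replicate_append_replicate]; push_cast; ring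
  · rw [rejected_dotProduct_output, fAnbn_of_not_inAstarBstar hx]

end Anbn

/-- The Hankel matrix of `f` has rank at most 7 (the span of its rows has dimension
at most 7); hence `f` is a rational series, computable by a WFA over ℚ. -/
theorem stmt_9 :
    Module.rank ℚ
      (Submodule.span ℚ
        (Set.range fun u : List Sig2 => fun v : List Sig2 => fAnbn (u ++ v))) ≤ 7 ∧
    ∃ A : WFA Sig2, ∀ x : List Sig2, A.run x = fAnbn x := by
  refine ⟨?_, Anbn.wfa, Anbn.run_wfa⟩
  have hrank := Anbn.wfa.rank_span_hankelRows_le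
  rwa [show Anbn.wfa.run = fAnbn from funext Anbn.run_wfa] at hrank
end

section
/- Let Σ = {a,b}, let k ≥ 1, j = k + 10, w₁ = aʲbʲaʲbʲaʲbʲ and w₂ = aʲb^{j-1}aʲb^{j+1}aʲbʲ. Then w₁ and w₂ have the same length, w₁ ∈ aⁿbⁿΣ* (with n = j > 0) but w₂ ∉ aⁿbⁿΣ*, and the multisets of k-windows (length-k factors, counted with multiplicity, including padded initial windows) of w₁ and w₂ are equal. -/
/-- The `k`-window of `x` ending at position `t` (0-indexed, inclusive): the last
(at most) `k` symbols of the prefix `x₁…x_{t+1}`; near the left edge the window is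
shorter (padded). -/
def window (k : ℕ) (x : List Sig2) (t : ℕ) : List Sig2 :=
  (x.take (t + 1)).drop (t + 1 - k)

/-- The multiset of all `k`-windows of `x` (one per position, with multiplicity). -/
def windows (k : ℕ) (x : List Sig2) : Multiset (List Sig2) :=
  ((List.range x.length).map (window k x) : List (List Sig2))

/-- Membership in `aⁿbⁿΣ* = {aⁿbⁿy | n > 0, y ∈ Σ*}`. -/
def InAnbnSigmaStar (x : List Sig2) : Prop :=
  ∃ n : ℕ, 0 < n ∧ ∃ y : List Sig2,
    x = List.replicate n Sig2.a ++ List.replicate n Sig2.b ++ y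

/-!
Away from the left edge a `k`-window only sees the last `k - 1` letters before the position it
ends at. Hence inserting one more `c` into a run of at least `k - 1` letters `c` adds exactly one
window, namely `cᵏ`, and leaves all others unchanged. The word `w₂` arises from `w₁` by moving
one `b` from the first `b`-run to the second, and both runs keep at least `k - 1` letters, so the
multisets of windows of `w₁` and `w₂` are both `{bᵏ}` plus the windows of `aʲbʲ⁻¹aʲbʲaʲbʲ`.
-/

open List Sig2

lemma window_append_of_lt {k t : ℕ} {x : List Sig2} (y : List Sig2) (ht : t < x.length) :
    window k (x ++ y) t = window k x t := by
  rw [window, window, take_append_of_le_length ht]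

def windowsAfter (k : ℕ) (x y : List Sig2) : Multiset (List Sig2) :=
  ((range y.length).map fun i => window k (x ++ y) (x.length + i) : List (List Sig2))

lemma windows_append (k : ℕ) (x y : List Sig2) :
    windows k (x ++ y) = windows k x + windowsAfter k x y := by
  rw [windows, windows, windowsAfter, length_append, range_add, map_append, map_map,
    ← Multiset.coe_add]
  congr 2
  exact map_congr_left fun t ht => window_append_of_lt y (mem_range.mp ht)

lemma window_append_append {k : ℕ} (u : List Sig2) {s : List Sig2} (y : List Sig2)
    (hs : k ≤ s.length + 1) (i : ℕ) :
    window k (u ++ s ++ y) (u.length + s.length + i) = window k (s ++ y) (s.length + i) := by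
  have hdrop : u.length + s.length + i + 1 - k = u.length + (s.length + i + 1 - k) := by omega
  have htake : u.length + s.length + i + 1 = u.length + (s.length + i + 1) := by omega
  rw [window, window, append_assoc, hdrop, htake, take_append, drop_append]
  simp

lemma windowsAfter_append_left {k : ℕ} (u : List Sig2) {s : List Sig2} (y : List Sig2)
    (hs : k ≤ s.length + 1) : windowsAfter k (u ++ s) y = windowsAfter k s y := by
  simp only [windowsAfter, length_append, window_append_append _ _ hs]

lemma windows_append_replicate_succ {k n : ℕ} (u : List Sig2) (c : Sig2) (y : List Sig2)
    (hn : k ≤ n + 1) :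
    windows k (u ++ replicate (n + 1) c ++ y) =
      replicate k c ::ₘ windows k (u ++ replicate n c ++ y) := by
  have hctx : ∀ m, k ≤ m + 1 → ∀ z,
      windowsAfter k (u ++ replicate m c) z = windowsAfter k (replicate (k - 1) c) z := by
    intro m hm z
    rw [show m = m - (k - 1) + (k - 1) by omega, ← replicate_append_replicate, ← append_assoc,
      windowsAfter_append_left _ _ (by rw [length_replicate]; omega)]
  have hlast : windowsAfter k (u ++ replicate n c) [c] = {replicate k c} := by
    rw [hctx n hn, windowsAfter, ← replicate_succ']
    simp only [window, length_replicate, length_singleton, range_one, map_cons, map_nil, add_zero,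
      take_replicate, drop_replicate, Multiset.coe_singleton]
    congr 2
    omega
  rw [windows_append, windows_append _ (u ++ replicate n c), hctx (n + 1) (by omega), ← hctx n hn,
    replicate_succ', ← append_assoc, windows_append _ (u ++ replicate n c), hlast,
    ← Multiset.singleton_add]
  abel

lemma windows_transfer_replicate {k n m : ℕ} (u v w : List Sig2) (c : Sig2)
    (hn : k ≤ n + 1) (hm : k ≤ m + 1) :
    windows k (u ++ replicate (n + 1) c ++ v ++ replicate m c ++ w) =
      windows k (u ++ replicate n c ++ v ++ replicate (m + 1) c ++ w) := by
  have h₁ := windows_append_replicate_succ u c (v ++ replicate m c ++ w) hn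
  have h₂ := windows_append_replicate_succ (u ++ replicate n c ++ v) c w hm
  simp only [append_assoc] at h₁ h₂ ⊢
  rw [h₁, h₂]

lemma windows_eq_of_shift_b {k j : ℕ} (hkj : k < j) :
    windows k (replicate j a ++ replicate j b ++ replicate j a ++ replicate j b ++
      replicate j a ++ replicate j b) =
    windows k (replicate j a ++ replicate (j - 1) b ++ replicate j a ++ replicate (j + 1) b ++
      replicate j a ++ replicate j b) := by
  obtain ⟨n, rfl⟩ := Nat.exists_eq_add_one_of_ne_zero (Nat.ne_zero_of_lt hkj)
  have h := windows_transfer_replicate (replicate (n + 1) a) (replicate (n + 1) a)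
    (replicate (n + 1) a ++ replicate (n + 1) b) b (k := k) (n := n) (m := n + 1)
    (by omega) (by omega)
  simpa only [Nat.add_sub_cancel, append_assoc] using h

lemma eq_of_replicate_append_cons_eq {c d : Sig2} (hcd : c ≠ d) {y z : List Sig2} :
    ∀ {n m : ℕ}, replicate n c ++ d :: y = replicate m c ++ d :: z → n = m ∧ y = z
  | 0, 0, h => ⟨rfl, (cons_inj_right _).mp h⟩
  | 0, _ + 1, h => absurd (head_eq_of_cons_eq h) hcd.symm
  | _ + 1, 0, h => absurd (head_eq_of_cons_eq h) hcd
  | _ + 1, _ + 1, h => by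
    obtain ⟨rfl, hyz⟩ := eq_of_replicate_append_cons_eq hcd (tail_eq_of_cons_eq h)
    exact ⟨rfl, hyz⟩

lemma not_inAnbnSigmaStar_of_lt {l m p : ℕ} (hl : 0 < l) (hlm : l < m) (hp : 0 < p)
    (z : List Sig2) :
    ¬ InAnbnSigmaStar (replicate m a ++ replicate l b ++ replicate p a ++ z) := by
  rintro ⟨n, hn, y, hy⟩
  obtain ⟨l, rfl⟩ := Nat.exists_eq_add_one_of_ne_zero hl.ne'
  obtain ⟨n, rfl⟩ := Nat.exists_eq_add_one_of_ne_zero hn.ne'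
  obtain ⟨p, rfl⟩ := Nat.exists_eq_add_one_of_ne_zero hp.ne'
  simp only [replicate_succ (a := b), replicate_succ (n := p), append_assoc, cons_append] at hy
  obtain ⟨rfl, hbs⟩ := eq_of_replicate_append_cons_eq (by decide : a ≠ b) hy
  have := congrArg (·[l]?) hbs
  simp [getElem?_append_left, show l < n by omega] at this

theorem stmt_13_general (k : ℕ) :
    let j := k + 10
    let w₁ := List.replicate j Sig2.a ++ List.replicate j Sig2.b ++
              List.replicate j Sig2.a ++ List.replicate j Sig2.b ++
              List.replicate j Sig2.a ++ List.replicate j Sig2.b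
    let w₂ := List.replicate j Sig2.a ++ List.replicate (j - 1) Sig2.b ++
              List.replicate j Sig2.a ++ List.replicate (j + 1) Sig2.b ++
              List.replicate j Sig2.a ++ List.replicate j Sig2.b
    w₁.length = w₂.length ∧
    (∃ y : List Sig2, w₁ = List.replicate j Sig2.a ++ List.replicate j Sig2.b ++ y) ∧
    InAnbnSigmaStar w₁ ∧
    ¬ InAnbnSigmaStar w₂ ∧
    windows k w₁ = windows k w₂ := by
  intro j w₁ w₂
  have hw₁ : w₁ = replicate j a ++ replicate j b ++
      (replicate j a ++ replicate j b ++ replicate j a ++ replicate j b) := by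
    simp only [w₁, append_assoc]
  have hw₂ : w₂ = replicate j a ++ replicate (j - 1) b ++ replicate j a ++
      (replicate (j + 1) b ++ replicate j a ++ replicate j b) := by
    simp only [w₂, append_assoc]
  refine ⟨?_, ⟨_, hw₁⟩, ⟨j, by omega, _, hw₁⟩, ?_, windows_eq_of_shift_b (by omega)⟩
  · simp only [w₁, w₂, length_append, length_replicate]
    omega
  · rw [hw₂]
    exact not_inAnbnSigmaStar_of_lt (by omega) (by omega) (by omega) _

/-- The suffix-attack pair: with `j = k + 10`,
`w₁ = aʲbʲaʲbʲaʲbʲ` and `w₂ = aʲb^{j-1}aʲb^{j+1}aʲbʲ` have the same length,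
`w₁ ∈ aⁿbⁿΣ*` (with `n = j > 0`) while `w₂ ∉ aⁿbⁿΣ*`, and their multisets of
`k`-windows coincide. -/
theorem stmt_13 (k : ℕ) (hk : 1 ≤ k) :
    let j := k + 10
    let w₁ := List.replicate j Sig2.a ++ List.replicate j Sig2.b ++
              List.replicate j Sig2.a ++ List.replicate j Sig2.b ++
              List.replicate j Sig2.a ++ List.replicate j Sig2.b
    let w₂ := List.replicate j Sig2.a ++ List.replicate (j - 1) Sig2.b ++
              List.replicate j Sig2.a ++ List.replicate (j + 1) Sig2.b ++
              List.replicate j Sig2.a ++ List.replicate j Sig2.b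
    w₁.length = w₂.length ∧
    (∃ y : List Sig2, w₁ = List.replicate j Sig2.a ++ List.replicate j Sig2.b ++ y) ∧
    InAnbnSigmaStar w₁ ∧
    ¬ InAnbnSigmaStar w₂ ∧
    windows k w₁ = windows k w₂ :=
  stmt_13_general k
end
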